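/- arXiv:1705.02779 — 2 statements merged into one kernel-verified Lean document; each statement's English description precedes it below -/
import Mathlib

section
/- For every z ∈ ℂ with Re z > 1 one has ∫₀^∞ u^{z−1} · u·e^{−2πu}/(1 − e^{−2πu})² du = Γ(z) · z · (2π)^{−(z+1)} · ζ(z). -/
/-!
Expanding `q / (1 - q)² = ∑ n qⁿ` at `q = e⁻ᵗ` and integrating term by term shows that the Mellin
transform of `e⁻ᵗ / (1 - e⁻ᵗ)²` at `s` is `Γ(s) ζ(s - 1)`. The integrand is `u^(z-1) · u · G(2πu)`
for this kernel `G`, so shifting `s = z + 1` and rescaling by `2π` gives the formula, with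
`Γ(z + 1) = z Γ(z)`.
-/

open Real Set MeasureTheory

theorem hasSum_natCast_mul_exp_neg_mul {t : ℝ} (ht : 0 < t) :
    HasSum (fun n : ℕ ↦ (n : ℝ) * rexp (-n * t)) (rexp (-t) / (1 - rexp (-t)) ^ 2) := by
  have hr : ‖rexp (-t)‖ < 1 := by
    rwa [norm_of_nonneg (exp_nonneg _), exp_lt_one_iff, neg_lt_zero]
  refine (hasSum_coe_mul_geometric_of_norm_lt_one hr).congr_fun fun n ↦ ?_
  rw [← exp_nat_mul, neg_mul, mul_neg]

theorem hasSum_one_div_nat_cpow_riemannZeta {s : ℂ} (hs : 1 < s.re) :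
    HasSum (fun n : ℕ ↦ 1 / (n : ℂ) ^ s) (riemannZeta s) :=
  zeta_eq_tsum_one_div_nat_cpow hs ▸ (Complex.summable_one_div_nat_cpow.mpr hs).hasSum

theorem mellin_exp_neg_div_one_sub_exp_neg_sq {s : ℂ} (hs : 2 < s.re) :
    mellin (fun t : ℝ ↦ ((rexp (-t) / (1 - rexp (-t)) ^ 2 : ℝ) : ℂ)) s
      = Complex.Gamma s * riemannZeta (s - 1) := by
  have hs1 : 1 < (s - 1).re := by
    rw [Complex.sub_re, Complex.one_re]; linarith
  have h_sum : Summable fun n : ℕ ↦ ‖(n : ℂ)‖ / (n : ℝ) ^ s.re := by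
    refine (Real.summable_nat_rpow.mpr (by linarith : 1 - s.re < -1)).congr fun n ↦ ?_
    rcases eq_or_ne n 0 with rfl | hn
    · simp [zero_rpow (by linarith : 1 - s.re ≠ 0), zero_rpow (by linarith : s.re ≠ 0)]
    · rw [Complex.norm_natCast, rpow_sub (by positivity), rpow_one]
  have hmellin := hasSum_mellin (a := fun n : ℕ ↦ (n : ℂ)) (p := fun n : ℕ ↦ (n : ℝ))
    (F := fun t : ℝ ↦ ((rexp (-t) / (1 - rexp (-t)) ^ 2 : ℝ) : ℂ)) (s := s)
    (fun n ↦ (Nat.eq_zero_or_pos n).imp (by simp [·]) Nat.cast_pos.mpr) (by linarith)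
    (fun t ht ↦ by exact_mod_cast Complex.hasSum_ofReal.mpr (hasSum_natCast_mul_exp_neg_mul ht))
    h_sum
  refine hmellin.unique <|
    ((hasSum_one_div_nat_cpow_riemannZeta hs1).mul_left _).congr_fun fun n ↦ ?_
  rcases eq_or_ne n 0 with rfl | hn
  · simp [Complex.zero_cpow (Complex.ne_zero_of_one_lt_re hs1)]
  · have hn : (n : ℂ) ≠ 0 := Nat.cast_ne_zero.mpr hn
    rw [Complex.ofReal_natCast, Complex.cpow_sub _ _ hn, Complex.cpow_one]
    field_simp

/-- The Mellin transform identity `∫₀^∞ u^{z-1} · u e^{-2πu}/(1-e^{-2πu})² du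
  = Γ(z) z (2π)^{-(z+1)} ζ(z)` for `Re z > 1`. -/
theorem mellin_g_two_tilde (z : ℂ) (hz : 1 < z.re) :
    ∫ u in Set.Ioi (0 : ℝ),
        (u : ℂ) ^ (z - 1) *
          ((u * Real.exp (-(2 * π * u)) / (1 - Real.exp (-(2 * π * u))) ^ 2 : ℝ) : ℂ)
      = Complex.Gamma z * z * (2 * (π : ℂ)) ^ (-(z + 1)) * riemannZeta z := by
  set G : ℝ → ℂ := fun t ↦ ((rexp (-t) / (1 - rexp (-t)) ^ 2 : ℝ) : ℂ)
  have hG : mellin G (z + 1) = Complex.Gamma (z + 1) * riemannZeta z := by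
    rw [mellin_exp_neg_div_one_sub_exp_neg_sq 
      (by rw [Complex.add_re, Complex.one_re]; linarith), add_sub_cancel_right]
  have hint : ∫ u in Ioi (0 : ℝ), (u : ℂ) ^ (z - 1) *
        ((u * rexp (-(2 * π * u)) / (1 - rexp (-(2 * π * u))) ^ 2 : ℝ) : ℂ)
      = mellin (fun u : ℝ ↦ (u : ℂ) ^ (1 : ℂ) • G (2 * π * u)) z := by
    refine setIntegral_congr_fun measurableSet_Ioi fun u _ ↦ ?_
    simp only [G, Complex.cpow_one, smul_eq_mul]
    push_cast
    ring
  rw [hint, mellin_cpow_smul, mellin_comp_mul_left _ _ (by positivity), hG,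
    Complex.Gamma_add_one z (Complex.ne_zero_of_one_lt_re hz), smul_eq_mul]
  push_cast
  ring
end

section
/- Let n ∈ ℕ with n ≥ 1, let i, j be indices in {1,…,n}, and let u > 0. Then ∫₀ᵘ (1 − e^{−4πv})^{−n} · (1 − e^{−4π(u−v)})^{−n} · (∫_{ℂⁿ} |Z_i|²·|Z_j|² · exp(−(B_{2v} + B_{2(u−v)})·‖Z‖²) dZ) dv = 2^{δ_{ij}} · (π²·(1 − e^{−4πu})^{n+2})^{−1} · (u·(1 + 4e^{−4πu} + e^{−8πu}) − (3/(4π))·(1 − e^{−8πu})), where δ_{ij} = 1 if i = j and δ_{ij} = 0 otherwise. -/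
/-!
For `0 < v < u` put `a = e^{-4πv}` and `b = e^{-4π(u-v)}`, so that `ab = e^{-4πu}`. Since
`coth x = (1 + e^{-2x}) / (1 - e^{-2x})`, the Gaussian exponent is
`c = B_{2v} + B_{2(u-v)} = π (1 - ab) / ((1 - a)(1 - b))`.
Lebesgue measure on `ℂⁿ` is the product of Lebesgue measures on the coordinate lines (both are
Haar measures giving `e^{-π‖Z‖²}` mass one), so the inner integral factors into the moments
`∫_ℂ |z|^{2m} e^{-c|z|²} dz = π m! / c^{m+1}` and equals `2^{δᵢⱼ} πⁿ / c^{n+2}`. The prefactors then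
reduce the integrand to `(1 - a)²(1 - b)² / (π² (1 - ab)^{n+2})`, a Laurent polynomial in `e^{4πv}`
that is integrated explicitly.
-/

open Real MeasureTheory intervalIntegral

noncomputable instance (n : ℕ) : MeasurableSpace (EuclideanSpace ℂ (Fin n)) := borel _
instance (n : ℕ) : BorelSpace (EuclideanSpace ℂ (Fin n)) := ⟨rfl⟩

theorem MeasureTheory.Measure.eq_of_integral_eq_of_isAddHaarMeasure {G : Type*}
    [AddGroup G] [TopologicalSpace G] [IsTopologicalAddGroup G] [LocallyCompactSpace G]
    [SecondCountableTopology G] [MeasurableSpace G] [BorelSpace G]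
    {μ μ' : Measure G} [μ.IsAddHaarMeasure] [μ'.IsAddHaarMeasure] {f : G → ℝ}
    (h : ∫ x, f x ∂μ' = ∫ x, f x ∂μ) (hf : ∫ x, f x ∂μ ≠ 0) : μ' = μ := by
  have hsmul := μ'.isAddLeftInvariant_eq_smul μ
  have hc : (μ'.addHaarScalarFactor μ : ℝ) = 1 := by
    rw [hsmul, integral_smul_nnreal_measure, NNReal.smul_def, smul_eq_mul] at h
    exact (mul_eq_right₀ hf).1 h
  rw [hsmul, NNReal.coe_eq_one.1 hc, one_smul]

theorem integral_exp_neg_pi_mul_norm_sq (V : Type*) [NormedAddCommGroup V]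
    [InnerProductSpace ℝ V] [FiniteDimensional ℝ V] [MeasurableSpace V] [BorelSpace V] :
    ∫ v : V, rexp (-(π * ‖v‖ ^ 2)) = 1 := by
  simpa [div_self pi_ne_zero] using GaussianFourier.integral_rexp_neg_mul_sq_norm (V := V) pi_pos

open Nat in
theorem Complex.integral_norm_sq_pow_mul_exp_neg_mul_norm_sq {c : ℝ} (hc : 0 < c) (m : ℕ) :
    ∫ z : ℂ, (‖z‖ ^ 2) ^ m * rexp (-(c * ‖z‖ ^ 2)) = π * m ! / c ^ (m + 1) := by
  have h := Complex.integral_rpow_mul_exp_neg_mul_rpow (p := 2) (q := (2 * m : ℕ)) one_le_two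
    (by linarith [(2 * m).cast_nonneg (α := ℝ)]) hc
  have hexp : (((2 * m : ℕ) : ℝ) + 2) / 2 = m + 1 := by push_cast; ring
  simp only [rpow_natCast, rpow_two, pow_mul, neg_mul, neg_div, hexp] at h
  rw [h, Real.Gamma_nat_eq_factorial, rpow_neg hc.le, ← Nat.cast_add_one, rpow_natCast]
  field_simp

namespace EuclideanSpace

variable {ι : Type*} [Fintype ι]

theorem exp_neg_mul_norm_sq_eq_prod (c : ℝ) (Z : EuclideanSpace ℂ ι) :
    rexp (-(c * ‖Z‖ ^ 2)) = ∏ k, rexp (-(c * ‖Z k‖ ^ 2)) := by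
  rw [norm_sq_eq, ← exp_sum, Finset.mul_sum, Finset.sum_neg_distrib]

variable [MeasurableSpace (EuclideanSpace ℂ ι)] [BorelSpace (EuclideanSpace ℂ ι)]

theorem volume_preserving_ofLp :
    MeasurePreserving (WithLp.ofLp : EuclideanSpace ℂ ι → ι → ℂ) := by
  let e := PiLp.continuousLinearEquiv 2 ℂ (fun _ : ι => ℂ)
  refine ⟨e.continuous.measurable, ?_⟩
  have : (volume.map (WithLp.ofLp : EuclideanSpace ℂ ι → ι → ℂ)).IsAddHaarMeasure :=
    e.isAddHaarMeasure_map volume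
  have gaussian_pi : ∫ w : ι → ℂ, ∏ k, rexp (-(π * ‖w k‖ ^ 2)) = 1 := by
    rw [integral_fintype_prod_volume_eq_prod (fun _ z => rexp (-(π * ‖z‖ ^ 2))),
      integral_exp_neg_pi_mul_norm_sq, Finset.prod_const_one]
  refine Measure.eq_of_integral_eq_of_isAddHaarMeasure
    (f := fun w => ∏ k, rexp (-(π * ‖w k‖ ^ 2))) ?_ (by rw [gaussian_pi]; exact one_ne_zero)
  rw [MeasurableEmbedding.integral_map (f := WithLp.ofLp) e.toHomeomorph.measurableEmbedding,
    gaussian_pi]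
  simp_rw [← exp_neg_mul_norm_sq_eq_prod]
  exact integral_exp_neg_pi_mul_norm_sq _

theorem integral_prod_apply (f : ι → ℂ → ℝ) :
    ∫ Z : EuclideanSpace ℂ ι, ∏ k, f k (Z k) = ∏ k, ∫ z, f k z := by
  rw [← integral_fintype_prod_volume_eq_prod f,
    ← volume_preserving_ofLp.integral_comp
      (PiLp.continuousLinearEquiv 2 ℂ (fun _ : ι => ℂ)).toHomeomorph.measurableEmbedding]

open Nat in
theorem integral_prod_norm_sq_pow_mul_exp_neg_mul_norm_sq {c : ℝ} (hc : 0 < c) (m : ι → ℕ) :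
    ∫ Z : EuclideanSpace ℂ ι, (∏ k, (‖Z k‖ ^ 2) ^ m k) * rexp (-(c * ‖Z‖ ^ 2))
      = π ^ Fintype.card ι * (∏ k, (m k)! : ℕ) / c ^ (Fintype.card ι + ∑ k, m k) := by
  simp_rw [exp_neg_mul_norm_sq_eq_prod, ← Finset.prod_mul_distrib]
  rw [integral_prod_apply (fun k z => (‖z‖ ^ 2) ^ m k * rexp (-(c * ‖z‖ ^ 2)))]
  simp_rw [Complex.integral_norm_sq_pow_mul_exp_neg_mul_norm_sq hc, Finset.prod_div_distrib,
    Finset.prod_mul_distrib, pow_succ, Finset.prod_mul_distrib, Finset.prod_pow_eq_pow_sum]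
  push_cast
  simp only [Finset.prod_const, Finset.card_univ, pow_add]
  ring

open Nat in
theorem integral_norm_sq_mul_norm_sq_mul_exp_neg_mul_norm_sq [DecidableEq ι] (i j : ι) {c : ℝ}
    (hc : 0 < c) :
    ∫ Z : EuclideanSpace ℂ ι, ‖Z i‖ ^ 2 * ‖Z j‖ ^ 2 * rexp (-(c * ‖Z‖ ^ 2))
      = (2 : ℝ) ^ (if i = j then 1 else 0 : ℕ) * π ^ Fintype.card ι / c ^ (Fintype.card ι + 2) := by
  set m : ι → ℕ := Pi.single i 1 + Pi.single j 1
  have hprod (x : ι → ℝ) : ∏ k, x k ^ m k = x i * x j := by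
    simp only [m, Pi.add_apply, pow_add, Finset.prod_mul_distrib, Pi.single_apply, pow_ite,
      pow_one, pow_zero, Finset.prod_ite_eq', Finset.mem_univ, if_true]
  have hsum : ∑ k, m k = 2 := by simp [m, Finset.sum_add_distrib]
  have hfact : (∏ k, (m k)! : ℕ) = 2 ^ (if i = j then 1 else 0 : ℕ) := by
    by_cases h : i = j
    · subst h
      simp [m, ← two_mul, Pi.single_apply, apply_ite Nat.factorial]
    · rw [if_neg h, pow_zero]
      refine Finset.prod_eq_one fun k _ => Nat.factorial_eq_one.2 ?_
      simp only [m, Pi.add_apply, Pi.single_apply]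
      split_ifs <;> simp_all
  calc _ = ∫ Z : EuclideanSpace ℂ ι, (∏ k, (‖Z k‖ ^ 2) ^ m k) * rexp (-(c * ‖Z‖ ^ 2)) := by
        simp_rw [hprod]
    _ = _ := by
        rw [integral_prod_norm_sq_pow_mul_exp_neg_mul_norm_sq hc, hsum, hfact]
        push_cast
        ring

end EuclideanSpace

theorem Real.inv_tanh_eq (x : ℝ) :
    (tanh x)⁻¹ = (1 + exp (-(2 * x))) / (1 - exp (-(2 * x))) := by
  rw [tanh_eq, inv_div, ← mul_div_mul_right _ _ (exp_ne_zero (-x)), add_mul, sub_mul,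
    ← exp_add, ← exp_add, add_neg_cancel, exp_zero, ← neg_add, ← two_mul]

theorem Real.one_sub_exp_neg_ne_zero {x : ℝ} (hx : x ≠ 0) : 1 - exp (-x) ≠ 0 := by
  rw [sub_ne_zero, ne_comm, Ne, exp_eq_one_iff, neg_eq_zero]
  exact hx

theorem Real.inv_tanh_add_inv_tanh {x y : ℝ} (hx : x ≠ 0) (hy : y ≠ 0) :
    (tanh x)⁻¹ + (tanh y)⁻¹
      = 2 * (1 - exp (-(2 * x)) * exp (-(2 * y)))
        / ((1 - exp (-(2 * x))) * (1 - exp (-(2 * y)))) := by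
  have hx' := one_sub_exp_neg_ne_zero (mul_ne_zero two_ne_zero hx)
  have hy' := one_sub_exp_neg_ne_zero (mul_ne_zero two_ne_zero hy)
  rw [inv_tanh_eq, inv_tanh_eq]
  field_simp
  ring

theorem integral_one_sub_exp_sq_mul_one_sub_exp_sq {k : ℝ} (hk : k ≠ 0) (u : ℝ) :
    ∫ v in (0 : ℝ)..u, (1 - exp (-(k * v))) ^ 2 * (1 - exp (-(k * (u - v)))) ^ 2
      = u * (1 + 4 * exp (-(k * u)) + exp (-(k * u)) ^ 2)
        - 3 / k * (1 - exp (-(k * u)) ^ 2) := by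
  set q := exp (-(k * u))
  have hexp (c v : ℝ) : HasDerivAt (fun v => exp (c * v)) (c * exp (c * v)) v := by
    simpa [mul_comm] using ((hasDerivAt_id v).const_mul c).exp
  let Φ : ℝ → ℝ := fun v => (1 + 4 * q + q ^ 2) * v
    + 2 * (1 + q) / k * (exp (-k * v) - q * exp (k * v))
    + (q ^ 2 * exp (k * v) ^ 2 - exp (-k * v) ^ 2) / (2 * k)
  have hΦ (v : ℝ) :
      HasDerivAt Φ ((1 - exp (-(k * v))) ^ 2 * (1 - exp (-(k * (u - v)))) ^ 2) v := by
    have h := (((hasDerivAt_id v).const_mul (1 + 4 * q + q ^ 2)).add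
      ((((hexp (-k) v).sub ((hexp k v).const_mul q))).const_mul (2 * (1 + q) / k))).add
      ((((hexp k v).pow 2).const_mul (q ^ 2)).sub ((hexp (-k) v).pow 2) |>.div_const (2 * k))
    refine h.congr_deriv ?_
    have hneg : exp (-k * v) = (exp (k * v))⁻¹ := by rw [neg_mul, exp_neg]
    have hb : exp (-(k * (u - v))) = q * exp (k * v) := by rw [← exp_add]; ring_nf
    rw [hb, hneg, ← neg_mul, hneg]
    have hE : exp (k * v) ≠ 0 := exp_ne_zero _
    generalize exp (k * v) = E at hE ⊢
    norm_num only [pow_one]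
    field_simp
    ring
  rw [integral_eq_sub_of_hasDerivAt (fun v _ => hΦ v)
    ((by fun_prop : Continuous _).intervalIntegrable _ _)]
  have hq : exp (-k * u) = q := by rw [neg_mul]
  have hqinv : exp (k * u) = q⁻¹ := by rw [← hq, ← exp_neg, neg_mul, neg_neg]
  have hq0 : q ≠ 0 := exp_ne_zero _
  simp only [Φ, hq, hqinv, mul_zero, exp_zero]
  field_simp
  ring

theorem mehler_integrand_eq (n : ℕ) (i j : Fin n) {u v : ℝ} (hv : 0 < v) (hvu : v < u) :
    (1 - exp (-(4 * π * v))) ^ (-(n : ℤ)) * (1 - exp (-(4 * π * (u - v)))) ^ (-(n : ℤ)) *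
      (∫ Z : EuclideanSpace ℂ (Fin n), ‖Z i‖ ^ 2 * ‖Z j‖ ^ 2 *
        exp (-((π / (2 * tanh (π * (2 * v))) + π / (2 * tanh (π * (2 * (u - v))))) * ‖Z‖ ^ 2)))
    = (2 : ℝ) ^ (if i = j then 1 else 0 : ℕ) * (π ^ 2 * (1 - exp (-(4 * π * u))) ^ (n + 2))⁻¹ *
        ((1 - exp (-(4 * π * v))) ^ 2 * (1 - exp (-(4 * π * (u - v)))) ^ 2) := by
  have hq : exp (-(4 * π * u)) = exp (-(4 * π * v)) * exp (-(4 * π * (u - v))) := by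
    rw [← exp_add]; ring_nf
  have h4 (x : ℝ) : 2 * (π * (2 * x)) = 4 * π * x := by ring
  have hB : π / (2 * tanh (π * (2 * v))) + π / (2 * tanh (π * (2 * (u - v))))
      = π * (1 - exp (-(4 * π * u)))
        / ((1 - exp (-(4 * π * v))) * (1 - exp (-(4 * π * (u - v))))) := by
    rw [show ∀ x y : ℝ, π / (2 * x) + π / (2 * y) = π / 2 * (x⁻¹ + y⁻¹) by intros; ring,
      inv_tanh_add_inv_tanh (by positivity) (by positivity), h4, h4, hq]
    ring
  set a := exp (-(4 * π * v))
  set b := exp (-(4 * π * (u - v)))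
  have ha : 0 < 1 - a := sub_pos.2 (exp_lt_one_iff.2 (by nlinarith [pi_pos]))
  have hb : 0 < 1 - b := sub_pos.2 (exp_lt_one_iff.2 (by nlinarith [pi_pos]))
  have hab : 0 < 1 - a * b := by nlinarith [exp_pos (-(4 * π * v)), exp_pos (-(4 * π * (u - v)))]
  rw [hB, EuclideanSpace.integral_norm_sq_mul_norm_sq_mul_exp_neg_mul_norm_sq i j
    (by rw [hq]; positivity), Fintype.card_fin, hq, zpow_neg, zpow_natCast, zpow_neg, zpow_natCast,
    div_pow, mul_pow, mul_pow, pow_add, pow_add, pow_add]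
  field_simp
  ring

theorem mehler_fourth_moment_integral_general (n : ℕ) (i j : Fin n)
    (u : ℝ) (hu : 0 < u) :
    (∫ v in (0 : ℝ)..u,
        (1 - Real.exp (-(4 * π * v))) ^ (-(n : ℤ)) *
          (1 - Real.exp (-(4 * π * (u - v)))) ^ (-(n : ℤ)) *
          (∫ Z : EuclideanSpace ℂ (Fin n),
            ‖Z i‖ ^ 2 * ‖Z j‖ ^ 2 *
              Real.exp (-((π / (2 * Real.tanh (π * (2 * v)))
                + π / (2 * Real.tanh (π * (2 * (u - v))))) * ‖Z‖ ^ 2))))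
      = (2 : ℝ) ^ (if i = j then 1 else 0 : ℕ) *
          (π ^ 2 * (1 - Real.exp (-(4 * π * u))) ^ (n + 2))⁻¹ *
          (u * (1 + 4 * Real.exp (-(4 * π * u)) + Real.exp (-(8 * π * u)))
            - (3 / (4 * π)) * (1 - Real.exp (-(8 * π * u)))) := by
  have h8 : exp (-(8 * π * u)) = exp (-(4 * π * u)) ^ 2 := by
    rw [← exp_nat_mul]; ring_nf
  rw [integral_of_le hu.le, integral_Ioc_eq_integral_Ioo,
    setIntegral_congr_fun measurableSet_Ioo fun v hv => mehler_integrand_eq n i j hv.1 hv.2,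
    ← integral_Ioc_eq_integral_Ioo, ← integral_of_le hu.le, intervalIntegral.integral_const_mul,
    integral_one_sub_exp_sq_mul_one_sub_exp_sq (by positivity), h8]

/-- Fourth-moment integral identity for the Mehler kernel:
`∫₀ᵘ (1-e^{-4πv})^{-n} (1-e^{-4π(u-v)})^{-n}
    (∫_{ℂⁿ} |Z_i|²|Z_j|² exp(-(B_{2v}+B_{2(u-v)})‖Z‖²) dZ) dv
  = 2^{δ_{ij}} (π² (1-e^{-4πu})^{n+2})⁻¹
      (u(1 + 4e^{-4πu} + e^{-8πu}) - (3/(4π))(1-e^{-8πu}))`,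
where `B_w = π/(2 tanh(π w))` and `ℂⁿ` carries the Lebesgue (Haar) measure. -/
theorem mehler_fourth_moment_integral (n : ℕ) (hn : 1 ≤ n) (i j : Fin n)
    (u : ℝ) (hu : 0 < u) :
    (∫ v in (0 : ℝ)..u,
        (1 - Real.exp (-(4 * π * v))) ^ (-(n : ℤ)) *
          (1 - Real.exp (-(4 * π * (u - v)))) ^ (-(n : ℤ)) *
          (∫ Z : EuclideanSpace ℂ (Fin n),
            ‖Z i‖ ^ 2 * ‖Z j‖ ^ 2 *
              Real.exp (-((π / (2 * Real.tanh (π * (2 * v)))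
                + π / (2 * Real.tanh (π * (2 * (u - v))))) * ‖Z‖ ^ 2))))
      = (2 : ℝ) ^ (if i = j then 1 else 0 : ℕ) *
          (π ^ 2 * (1 - Real.exp (-(4 * π * u))) ^ (n + 2))⁻¹ *
          (u * (1 + 4 * Real.exp (-(4 * π * u)) + Real.exp (-(8 * π * u)))
            - (3 / (4 * π)) * (1 - Real.exp (-(8 * π * u)))) :=
  mehler_fourth_moment_integral_general n i j u hu
end
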